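/- The directed odd cycles are exactly the asymmetric CKI-digraphs among arc-locally in-semicomplete digraphs, among arc-locally out-semicomplete digraphs, and among 3-anti-quasi-transitive TT₃-free digraphs. -/

import Mathlib

/-- A kernel of a digraph given by arc relation `A`: an independent and absorbent set. -/
def IsKernel {V : Type} (A : V → V → Prop) (S : Set V) : Prop :=
  (∀ u ∈ S, ∀ v ∈ S, ¬ A u v) ∧ (∀ u, u ∉ S → ∃ v ∈ S, A u v)

def HasKernel {V : Type} (A : V → V → Prop) : Prop := ∃ S, IsKernel A S

/-- The induced subdigraph on a vertex subset `S`. -/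
def Induced {V : Type} (A : V → V → Prop) (S : Set V) : S → S → Prop :=
  fun u v => A u v

/-- Critical kernel imperfect: no kernel, but every proper induced subdigraph has one. -/
def IsCKI {V : Type} (A : V → V → Prop) : Prop :=
  ¬ HasKernel A ∧ ∀ S : Set V, S ≠ Set.univ → HasKernel (Induced A S)

/-- Kernel perfect: every induced subdigraph (including the whole digraph) has a kernel. -/
def IsKP {V : Type} (A : V → V → Prop) : Prop :=
  ∀ S : Set V, HasKernel (Induced A S)

/-- Isomorphism of digraphs. -/
def DigraphIso {V W : Type} (A : V → V → Prop) (B : W → W → Prop) : Prop :=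
  ∃ e : V ≃ W, ∀ u v, A u v ↔ B (e u) (e v)

/-- The circulant digraph on `ZMod m` with connection set `J`. -/
def Circ (m : ℕ) (J : Set (ZMod m)) : ZMod m → ZMod m → Prop :=
  fun i j => j - i ∈ J

/-- The connection set `{1, ±2, ±3, …, ±⌊n/2⌋}`. -/
def Jfull (n : ℕ) : Set (ZMod n) :=
  {j | j = 1 ∨ ∃ k : ℕ, 2 ≤ k ∧ k ≤ n / 2 ∧ (j = (k : ZMod n) ∨ j = -(k : ZMod n))}

/-- The connection set `{2, −3, 4, …, (−1)ⁿ·n}` of `C⃗_{2n+1}(2,−3,…,(−1)ⁿn)`. -/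
def Jalt (n : ℕ) : Set (ZMod (2 * n + 1)) :=
  {j | ∃ k : ℕ, 2 ≤ k ∧ k ≤ n ∧ j = (-1 : ZMod (2 * n + 1)) ^ k * (k : ZMod (2 * n + 1))}

/-- The underlying simple graph of a digraph. -/
def underlying {V : Type} (A : V → V → Prop) : SimpleGraph V where
  Adj u v := u ≠ v ∧ (A u v ∨ A v u)
  symm := ⟨fun _ _ h => ⟨h.1.symm, h.2.symm⟩⟩
  loopless := ⟨fun _ h => h.1 rfl⟩

/-- The clique number of a simple graph. -/
noncomputable def cliqueNum' {W : Type} (G : SimpleGraph W) : ℕ :=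
  sSup {n | ∃ t : Finset W, G.IsNClique n t}

/-- A graph is perfect if each induced subgraph has chromatic number equal to clique number. -/
def IsPerfectGraph {V : Type} (G : SimpleGraph V) : Prop :=
  ∀ S : Set V, (G.induce S).chromaticNumber = (cliqueNum' (G.induce S) : ℕ∞)

def Asymmetric' {V : Type} (A : V → V → Prop) : Prop := ∀ u v, A u v → ¬ A v u

def LocallyInSemicomplete {V : Type} (A : V → V → Prop) : Prop :=
  ∀ v x y, A x v → A y v → x ≠ y → (A x y ∨ A y x)

def LocallyOutSemicomplete {V : Type} (A : V → V → Prop) : Prop :=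
  ∀ v x y, A v x → A v y → x ≠ y → (A x y ∨ A y x)

def QuasiTransitive {V : Type} (A : V → V → Prop) : Prop :=
  ∀ u v w, A u v → A v w → u ≠ w → (A u w ∨ A w u)

def ThreeQuasiTransitive {V : Type} (A : V → V → Prop) : Prop :=
  ∀ u v w x, A u v → A v w → A w x → u ≠ x → (A u x ∨ A x u)

def ArcLocallyInSemicomplete {V : Type} (A : V → V → Prop) : Prop :=
  ∀ u v x y, A u v → A x u → A y v → x ≠ y → (A x y ∨ A y x)

def ArcLocallyOutSemicomplete {V : Type} (A : V → V → Prop) : Prop :=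
  ∀ u v x y, A u v → A u x → A v y → x ≠ y → (A x y ∨ A y x)

/-- 3-anti-quasi-transitive: the endpoints of every anti-directed path on 4 vertices are adjacent. -/
def ThreeAntiQuasiTransitive {V : Type} (A : V → V → Prop) : Prop :=
  ∀ u v w x, u ≠ w → v ≠ x → u ≠ x →
    ((A u v ∧ A w v ∧ A w x) ∨ (A v u ∧ A v w ∧ A x w)) → (A u x ∨ A x u)

def TT3Free {V : Type} (A : V → V → Prop) : Prop :=
  ¬ ∃ u v w, u ≠ v ∧ v ≠ w ∧ u ≠ w ∧ A u v ∧ A v w ∧ A u w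

def IsTournament {V : Type} (A : V → V → Prop) : Prop :=
  (∀ u v, A u v → ¬ A v u) ∧ (∀ u v, u ≠ v → A u v ∨ A v u)

def Converse {V : Type} (A : V → V → Prop) : V → V → Prop := fun u v => A v u

/-- Complete multipartite: non-adjacency is transitive. -/
def CompleteMultipartite {V : Type} (G : SimpleGraph V) : Prop :=
  Transitive (fun u v => ¬ G.Adj u v)

/-- A diagonal of the cycle `c 0, c 1, …, c (N-1), c 0`: an arc of `D` between cycle
vertices which is not an arc of the cycle. -/
def IsDiagonal {V : Type} (A : V → V → Prop) {N : ℕ} [NeZero N] (c : Fin N → V) (i j : Fin N) : Prop :=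
  i ≠ j ∧ j ≠ i + 1 ∧ A (c i) (c j)

/-
A CKI-digraph `D` is strongly connected: if no arc left a nonempty proper set `X`, a kernel of
`D[X]` together with a kernel of the vertices outside `X` that it does not absorb would be a
kernel of `D`. Having no kernel, `D` cannot be split into vertices at even and at odd distance
from a fixed vertex, so it has a closed walk of odd length. A shortest one is a cycle
`g 0 → g 1 → ⋯ → g (M - 1) → g 0`, and an arc `g a → g (a + s)` with `s` odd and `1 < s` would
short-cut it. In each of the three families, the local condition applied next to an arc
`g a → g (a + s)` with `s` even yields an arc of even length `s - 2` or a forbidden one of odd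
length; for `s = 2` it gives a transitive triangle or forces all arcs `g b → g (b + 2)`, again a
short-cut. So the cycle is an induced directed odd cycle; it has no kernel and hence is all of
`D`. Conversely, a directed odd cycle has no kernel, while each proper induced subdigraph is a
union of directed paths.
-/

open Set

section Kernels

variable {V W : Type} {A : V → V → Prop} {B : W → W → Prop}

lemma hasKernel_induced_iff {S : Set V} :
    HasKernel (Induced A S) ↔ ∃ K ⊆ S, (∀ u ∈ K, ∀ v ∈ K, ¬ A u v) ∧
      ∀ u ∈ S, u ∉ K → ∃ v ∈ K, A u v := by
  constructor
  · rintro ⟨K, hind, habs⟩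
    refine ⟨Subtype.val '' K, by simp, ?_, ?_⟩
    · rintro _ ⟨u, hu, rfl⟩ _ ⟨v, hv, rfl⟩
      exact hind u hu v hv
    · intro u hu huK
      obtain ⟨v, hv, huv⟩ := habs ⟨u, hu⟩ fun h => huK ⟨_, h, rfl⟩
      exact ⟨v, mem_image_of_mem _ hv, huv⟩
  · rintro ⟨K, hKS, hind, habs⟩
    refine ⟨{x | x.1 ∈ K}, fun u hu v hv => hind u hu v hv, fun u hu => ?_⟩
    obtain ⟨v, hv, huv⟩ := habs u u.2 hu
    exact ⟨⟨v, hKS hv⟩, hv, huv⟩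

lemma IsKernel.preimage_equiv (e : V ≃ W) (he : ∀ u v, A u v ↔ B (e u) (e v)) {K : Set W}
    (hK : IsKernel B K) : IsKernel A (e ⁻¹' K) := by
  refine ⟨fun u hu v hv huv => hK.1 _ hu _ hv ((he u v).1 huv), fun u hu => ?_⟩
  obtain ⟨w, hw, huw⟩ := hK.2 (e u) hu
  exact ⟨e.symm w, by simpa using hw, (he _ _).2 (by simpa using huw)⟩

lemma DigraphIso.symm (h : DigraphIso A B) : DigraphIso B A := by
  obtain ⟨e, he⟩ := h
  exact ⟨e.symm, fun u v => by simpa using (he (e.symm u) (e.symm v)).symm⟩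

lemma DigraphIso.hasKernel (h : DigraphIso A B) (hB : HasKernel B) : HasKernel A := by
  obtain ⟨e, he⟩ := h
  obtain ⟨K, hK⟩ := hB
  exact ⟨_, hK.preimage_equiv e he⟩

lemma DigraphIso.isCKI (h : DigraphIso A B) (hB : IsCKI B) : IsCKI A := by
  refine ⟨fun hA => hB.1 (h.symm.hasKernel hA), fun S hS => ?_⟩
  obtain ⟨e, he⟩ := h
  have hS' : e '' S ≠ univ := by
    obtain ⟨x, hx⟩ := (ne_univ_iff_exists_notMem S).1 hS
    exact (ne_univ_iff_exists_notMem _).2 ⟨e x, by simpa using hx⟩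
  exact DigraphIso.hasKernel (B := Induced B (e '' S)) ⟨e.image S, fun u v => he u v⟩
    (hB.2 _ hS')

end Kernels

section Circulant

variable {m : ℕ}

lemma circ_one_iff {i j : ZMod m} : Circ m {1} i j ↔ j = i + 1 := by
  simp [Circ, sub_eq_iff_eq_add']

lemma digraphIso_circ_one_of_equiv {V : Type} {A : V → V → Prop} (e : ZMod m ≃ V)
    (h : ∀ i j, A (e i) (e j) ↔ j = i + 1) : DigraphIso A (Circ m {1}) :=
  ⟨e.symm, fun u v => by rw [circ_one_iff, ← h, e.apply_symm_apply, e.apply_symm_apply]⟩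

lemma ZMod.not_forall_add_one_iff_not (hm : Odd m) (P : ZMod m → Prop) :
    ¬ ∀ i, P (i + 1) ↔ ¬ P i := by
  intro h
  have hpow : ∀ k : ℕ, P k ↔ (P 0 ↔ Even k) := by
    intro k
    induction k with
    | zero => simp
    | succ k ih => rw [Nat.cast_succ, h, ih, Nat.even_add_one]; tauto
  have h0 := hpow m
  rw [ZMod.natCast_self] at h0
  exact Nat.not_even_iff_odd.2 hm (by tauto)

lemma circ_one_not_hasKernel (hm : Odd m) : ¬ HasKernel (Circ m {1}) := by
  rintro ⟨K, hind, habs⟩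
  refine ZMod.not_forall_add_one_iff_not hm (· ∈ K) fun i => ⟨fun h hi => ?_, fun hi => ?_⟩
  · exact hind i hi (i + 1) h (circ_one_iff.2 rfl)
  · obtain ⟨v, hv, hiv⟩ := habs i hi
    rwa [circ_one_iff.1 hiv] at hv

lemma circ_one_hasKernel_induced [NeZero m] {S : Set (ZMod m)} (hS : S ≠ univ) :
    HasKernel (Induced (Circ m {1}) S) := by
  classical
  obtain ⟨z, hz⟩ := (ne_univ_iff_exists_notMem S).1 hS
  have hex : ∀ u : ZMod m, ∃ k : ℕ, u + k + 1 ∉ S := fun u =>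
    ⟨(z - u - 1).val, by rwa [ZMod.natCast_zmod_val, show u + (z - u - 1) + 1 = z by ring]⟩
  -- `u, u + 1, …, u + t u` is the longest path in `S` starting at `u`; keep every other vertex,
  -- counted from its end
  set t : ZMod m → ℕ := fun u => Nat.find (hex u)
  have ht : ∀ u, u + 1 ∈ S → t u = t (u + 1) + 1 := by
    intro u hu
    refine (Nat.find_comp_succ (hex u) ?_ (by simpa using hu)).trans ?_
    · simpa [add_assoc, add_comm, add_left_comm] using hex (u + 1)
    · congr 1
      exact Nat.find_congr' (by intro k; push_cast; ring_nf)
  refine hasKernel_induced_iff.2 ⟨{u | u ∈ S ∧ Even (t u)}, fun u hu => hu.1, ?_, ?_⟩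
  · rintro u ⟨-, hu⟩ v ⟨hvS, hv⟩ huv
    rw [circ_one_iff.1 huv] at hvS hv
    rw [ht u hvS] at hu
    exact Nat.even_add_one.1 hu hv
  · intro u huS hu
    have hodd : Odd (t u) := Nat.not_even_iff_odd.1 fun h => hu ⟨huS, h⟩
    have hu1 : u + 1 ∈ S := by
      by_contra h
      have : t u = 0 := Nat.find_eq_zero _ |>.2 (by simpa using h)
      rw [this] at hodd
      exact Nat.not_odd_zero hodd
    refine ⟨u + 1, ⟨hu1, ?_⟩, circ_one_iff.2 rfl⟩
    rw [ht u hu1] at hodd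
    exact Nat.not_odd_iff_even.1 (Nat.odd_add_one.1 hodd)

lemma isCKI_circ_one (hm : Odd m) : IsCKI (Circ m {1}) :=
  have : NeZero m := ⟨hm.pos.ne'⟩
  ⟨circ_one_not_hasKernel hm, fun _ hS => circ_one_hasKernel_induced hS⟩

end Circulant

section Walks

variable {V : Type} {A : V → V → Prop}

def HasWalk (A : V → V → Prop) (n : ℕ) (u v : V) : Prop :=
  ∃ f : ℕ → V, f 0 = u ∧ f n = v ∧ ∀ i < n, A (f i) (f (i + 1))

lemma HasWalk.refl (u : V) : HasWalk A 0 u u :=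
  ⟨fun _ => u, rfl, rfl, fun _ h => absurd h (Nat.not_lt_zero _)⟩

lemma HasWalk.single {u v : V} (h : A u v) : HasWalk A 1 u v :=
  ⟨fun i => if i = 0 then u else v, rfl, rfl, fun i hi => by simp [Nat.lt_one_iff.1 hi, h]⟩

lemma HasWalk.trans {m n : ℕ} {u v w : V} (h₁ : HasWalk A m u v) (h₂ : HasWalk A n v w) :
    HasWalk A (m + n) u w := by
  obtain ⟨f, hf0, hfm, hf⟩ := h₁
  obtain ⟨g, hg0, hgn, hg⟩ := h₂
  refine ⟨fun i => if i ≤ m then f i else g (i - m), by simp [hf0], ?_, fun i hi => ?_⟩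
  · rcases Nat.eq_zero_or_pos n with rfl | hn
    · simp [hfm, ← hg0, hgn]
    · simp [show ¬ m + n ≤ m by omega, hgn]
  · rcases lt_or_ge i m with him | him
    · simpa [him.le, Nat.succ_le_of_lt him] using hf i him
    · have := hg (i - m) (by omega)
      rcases him.eq_or_lt with rfl | him'
      · simpa [hfm, ← hg0] using this
      · simpa [him'.not_ge, show ¬ i + 1 ≤ m by omega, Nat.sub_add_comm him] using this

lemma HasWalk.of_converse {n : ℕ} {u v : V} (h : HasWalk (Converse A) n u v) :
    HasWalk A n v u := by
  obtain ⟨f, hf0, hfn, hf⟩ := h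
  refine ⟨fun i => f (n - i), by simpa using hfn, by simpa using hf0, fun i hi => ?_⟩
  have := hf (n - (i + 1)) (by omega)
  rwa [show n - (i + 1) + 1 = n - i by omega] at this

end Walks

namespace IsCKI

variable {V : Type} {A : V → V → Prop}

lemma eq_univ_of_outClosed (hc : IsCKI A) {X : Set V} (hX : X.Nonempty)
    (hcl : ∀ x ∈ X, ∀ y, A x y → y ∈ X) : X = univ := by
  by_contra hXu
  obtain ⟨K₁, hK₁X, hind₁, habs₁⟩ := hasKernel_induced_iff.1 (hc.2 X hXu)
  set Y := {v | v ∉ X ∧ ∀ k ∈ K₁, ¬ A v k}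
  have hY : Y ≠ univ := fun h => (h.symm ▸ mem_univ hX.some : hX.some ∈ Y).1 hX.some_mem
  obtain ⟨K₂, hK₂Y, hind₂, habs₂⟩ := hasKernel_induced_iff.1 (hc.2 Y hY)
  refine hc.1 ⟨K₁ ∪ K₂, ?_, fun u hu => ?_⟩
  · rintro u (hu | hu) v (hv | hv) huv
    · exact hind₁ u hu v hv huv
    · exact (hK₂Y hv).1 (hcl u (hK₁X hu) v huv)
    · exact (hK₂Y hu).2 v hv huv
    · exact hind₂ u hu v hv huv
  rw [mem_union, not_or] at hu
  by_cases huX : u ∈ X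
  · obtain ⟨v, hv, huv⟩ := habs₁ u huX hu.1
    exact ⟨v, .inl hv, huv⟩
  by_cases huK₁ : ∃ k ∈ K₁, A u k
  · obtain ⟨k, hk, huk⟩ := huK₁
    exact ⟨k, .inl hk, huk⟩
  push Not at huK₁
  obtain ⟨v, hv, huv⟩ := habs₂ u ⟨huX, huK₁⟩ hu.2
  exact ⟨v, .inr hv, huv⟩

lemma exists_hasWalk (hc : IsCKI A) (u v : V) : ∃ n, HasWalk A n u v := by
  have hX := hc.eq_univ_of_outClosed (X := {v | ∃ n, HasWalk A n u v}) ⟨u, 0, .refl u⟩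
    fun _ ⟨n, hn⟩ _ hxy => ⟨n + 1, hn.trans (.single hxy)⟩
  exact eq_univ_iff_forall.1 hX v

lemma exists_arc (hc : IsCKI A) (u : V) : ∃ v, A u v := by
  by_contra! h
  have hu : {u} = univ := hc.eq_univ_of_outClosed (singleton_nonempty u)
    fun _ hx y hxy => absurd (mem_singleton_iff.1 hx ▸ hxy) (h y)
  refine hc.1 ⟨{u}, fun x hx y _ hxy => h y (mem_singleton_iff.1 hx ▸ hxy), fun v hv => ?_⟩
  exact absurd (hu.symm ▸ mem_univ v) hv

/-- Otherwise the vertices reachable from a fixed vertex by a walk of even length form a kernel. -/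
lemma exists_odd_closed_walk (hc : IsCKI A) : ∃ n u, Odd n ∧ HasWalk A n u u := by
  by_contra! hno
  obtain ⟨u₀⟩ : Nonempty V := by
    by_contra! h
    exact hc.1 ⟨∅, fun u => isEmptyElim u, fun u => isEmptyElim u⟩
  have hsep : ∀ v m n, Even m → Odd n → HasWalk A m u₀ v → ¬ HasWalk A n u₀ v := by
    intro v m n hm hn hwm hwn
    obtain ⟨q, hq⟩ := hc.exists_hasWalk v u₀
    rcases Nat.even_or_odd q with hq' | hq'
    · exact hno _ _ (hn.add_even hq') (hwn.trans hq)
    · exact hno _ _ (hm.add_odd hq') (hwm.trans hq)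
  refine hc.1 ⟨{v | ∃ n, Even n ∧ HasWalk A n u₀ v}, ?_, fun u hu => ?_⟩
  · rintro u ⟨m, hm, hwu⟩ v ⟨n, hn, hwv⟩ huv
    exact hsep v n (m + 1) hn hm.add_one hwv (hwu.trans (.single huv))
  · obtain ⟨n, hn⟩ := hc.exists_hasWalk u₀ u
    have hodd : Odd n := Nat.not_even_iff_odd.1 fun h => hu ⟨n, h, hn⟩
    obtain ⟨v, huv⟩ := hc.exists_arc u
    exact ⟨v, ⟨n + 1, hodd.add_one, hn.trans (.single huv)⟩, huv⟩

end IsCKI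

structure IsShortestOddCycle {V : Type} (A : V → V → Prop) (M : ℕ) (g : ZMod M → V) :
    Prop where
  odd : Odd M
  arc : ∀ i, A (g i) (g (i + 1))
  minimal : ∀ n < M, Odd n → ∀ u, ¬ HasWalk A n u u

/-- For a shortest odd cycle, minimality and asymmetry already exclude all other chords
(`IsShortestOddCycle.arc_iff`). -/
def EvenChordFree {V : Type} (A : V → V → Prop) (M : ℕ) (g : ZMod M → V) : Prop :=
  ∀ (s : ℕ) (a : ZMod M), Even s → 2 ≤ s → s + 3 ≤ M → ¬ A (g a) (g (a + s))

lemma exists_isShortestOddCycle {V : Type} {A : V → V → Prop}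
    (h : ∃ n u, Odd n ∧ HasWalk A n u u) : ∃ M g, IsShortestOddCycle A M g := by
  classical
  have h' : ∃ n, Odd n ∧ ∃ u, HasWalk A n u u := by
    obtain ⟨n, u, hn, hw⟩ := h
    exact ⟨n, hn, u, hw⟩
  obtain ⟨hodd, u, f, hf0, hfM, hf⟩ := Nat.find_spec h'
  set M := Nat.find h'
  have : NeZero M := ⟨hodd.pos.ne'⟩
  refine ⟨M, fun i => f i.val, hodd, fun i => ?_,
    fun n hn hn' u hu => Nat.find_min h' hn ⟨hn', u, hu⟩⟩
  have hsucc : f (i + 1).val = f (i.val + 1) := by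
    rw [← ZMod.natCast_zmod_val i, ← Nat.cast_add_one, ZMod.val_natCast, ZMod.natCast_zmod_val]
    rcases (Nat.add_one_le_of_lt (ZMod.val_lt i)).eq_or_lt with h | h
    · rw [h, Nat.mod_self, hf0, hfM]
    · rw [Nat.mod_eq_of_lt h]
  simpa only [hsucc] using hf _ (ZMod.val_lt i)

namespace IsShortestOddCycle

variable {V : Type} {A : V → V → Prop} {M : ℕ} {g : ZMod M → V}

lemma hasWalk_add (hc : IsShortestOddCycle A M g) (b : ZMod M) (k : ℕ) :
    HasWalk A k (g b) (g (b + k)) :=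
  ⟨fun t => g (b + t), by simp, rfl, fun t _ => by simpa [add_assoc] using hc.arc (b + t)⟩

/-- A walk from `g a` to `g (a + s)` closes up, along the cycle, to a closed walk of length
`k + (M - s)`. -/
lemma le_of_hasWalk (hc : IsShortestOddCycle A M g) {a : ZMod M} {k s : ℕ} (hsM : s ≤ M)
    (hpar : Even (k + s)) (hw : HasWalk A k (g a) (g (a + s))) : s ≤ k := by
  by_contra hlt
  have hclosed := hw.trans (hc.hasWalk_add (a + s) (M - s))
  rw [Nat.cast_sub hsM, ZMod.natCast_self, add_assoc, add_sub_cancel, add_zero] at hclosed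
  have hodd : Odd (k + (M - s)) := by
    have := hc.odd
    rw [Nat.odd_iff] at this ⊢
    rw [Nat.even_iff] at hpar
    omega
  exact hc.minimal _ (by omega) hodd _ hclosed

lemma arc_of_eq (hc : IsShortestOddCycle A M g) {i j : ZMod M} (h : j = i + 1) :
    A (g i) (g j) :=
  h ▸ hc.arc i

lemma injective (hc : IsShortestOddCycle A M g) : Function.Injective g := by
  have : NeZero M := ⟨hc.odd.pos.ne'⟩
  intro i j hij
  obtain ⟨d, hdM, rfl⟩ : ∃ d < M, j = i + d :=
    ⟨(j - i).val, ZMod.val_lt _, by simp⟩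
  rcases Nat.eq_zero_or_pos d with rfl | hd
  · simp
  rcases Nat.even_or_odd d with hde | hdo
  · have := hc.le_of_hasWalk (a := i) (k := 0) hdM.le (by simpa using hde)
      (by rw [← hij]; exact .refl _)
    omega
  · have e : i + d + ((M - d : ℕ) : ZMod M) = i := by
      rw [Nat.cast_sub hdM.le, ZMod.natCast_self]
      ring
    have := hc.le_of_hasWalk (k := 0) (Nat.sub_le M d)
      (by simpa using Nat.Odd.sub_odd hc.odd hdo) (by rw [e, hij]; exact .refl _)
    omega

lemma apply_ne (hc : IsShortestOddCycle A M g) {i j : ZMod M} {d : ℕ} (hd : 0 < d) (hdM : d < M)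
    (h : j = i + d) : g i ≠ g j := by
  intro hij
  have hd0 : (d : ZMod M) = 0 := left_eq_add.1 (h ▸ hc.injective hij)
  have := Nat.le_of_dvd hd ((ZMod.natCast_eq_zero_iff d M).1 hd0)
  omega

lemma three_le (hc : IsShortestOddCycle A M g) (ha : Asymmetric' A) : 3 ≤ M := by
  by_contra hlt
  have hM : M = 1 := by
    have := Nat.odd_iff.1 hc.odd
    omega
  have h := hc.arc 0
  rw [zero_add, show (1 : ZMod M) = 0 by rw [← Nat.cast_one, ← hM, ZMod.natCast_self]] at h
  exact ha _ _ h h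

/-- With the cycle path from `g a` to `g (a + s)` it would close an odd walk of length `s + 1`. -/
lemma not_backward_chord (hc : IsShortestOddCycle A M g) {s : ℕ} (hs : Even s) (hsM : s + 3 ≤ M)
    (a : ZMod M) : ¬ A (g (a + s)) (g a) := by
  intro h
  have e : a + s + ((M - s : ℕ) : ZMod M) = a := by
    rw [Nat.cast_sub (by omega), ZMod.natCast_self]
    ring
  have := hc.le_of_hasWalk (a := a + s) (k := 1) (Nat.sub_le M s)
    (by rw [add_comm]; exact (Nat.Odd.sub_even (by omega) hc.odd hs).add_one)
    (by rw [e]; exact .single h)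
  omega

lemma not_chord_two_of_chord_two (hc : IsShortestOddCycle A M g) (hM : 5 ≤ M) {a : ZMod M}
    (h : A (g a) (g (a + 2))) : ¬ A (g (a + 2)) (g (a + 4)) := by
  intro h'
  have := hc.le_of_hasWalk (a := a) (s := 4) (k := 2) (by omega) (by decide)
    (by simpa using (HasWalk.single h).trans (.single h'))
  omega

lemma converse (hc : IsShortestOddCycle A M g) :
    IsShortestOddCycle (Converse A) M (fun i => g (-i)) where
  odd := hc.odd
  arc i := hc.arc_of_eq (by ring)
  minimal n hn hodd u hw := hc.minimal n hn hodd u hw.of_converse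

lemma arc_iff (hc : IsShortestOddCycle A M g) (ha : Asymmetric' A) (he : EvenChordFree A M g)
    (i j : ZMod M) : A (g i) (g j) ↔ j = i + 1 := by
  have : NeZero M := ⟨hc.odd.pos.ne'⟩
  refine ⟨fun h => ?_, hc.arc_of_eq⟩
  obtain ⟨s, hsM, rfl⟩ : ∃ s < M, j = i + s :=
    ⟨(j - i).val, ZMod.val_lt _, by simp⟩
  have hM := Nat.odd_iff.1 hc.odd
  rcases Nat.even_or_odd s with hs | hs
  · exfalso
    rcases Nat.eq_zero_or_pos s with rfl | hs0
    · exact ha _ _ h (by simpa using h)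
    by_cases hs' : s + 1 = M
    · exact ha _ _ (hc.arc_of_eq (by rw [add_assoc, ← Nat.cast_add_one, hs', ZMod.natCast_self,
        add_zero])) h
    · have := Nat.even_iff.1 hs
      exact he s i hs (by omega) (by omega) h
  · rcases Nat.lt_or_ge s 2 with hs1 | hs1
    · obtain rfl : s = 1 := by have := hs.pos; omega
      simp
    · have := hc.le_of_hasWalk hsM.le (odd_one.add_odd hs) (.single h)
      omega

lemma not_chord_two_of_arcLocallyIn (hc : IsShortestOddCycle A M g)
    (hf : ArcLocallyInSemicomplete A) (hM : 5 ≤ M) (a : ZMod M) : ¬ A (g a) (g (a + 2)) := by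
  intro h
  have hstep : ∀ b, A (g b) (g (b + 2)) → A (g (b - 1)) (g (b - 1 + 2)) := by
    intro b hb
    have hne : g (b - 1) ≠ g (b - 1 + 2) := hc.apply_ne (d := 2) (by omega) (by omega) (by simp)
    refine (hf (g b) (g (b + 2)) (g (b - 1)) (g (b - 1 + 2)) hb (hc.arc_of_eq (by ring))
      (hc.arc_of_eq (by ring)) hne).resolve_right ?_
    simpa using hc.not_backward_chord (s := 2) even_two (by omega) (b - 1)
  have hall : ∀ k : ℕ, A (g (a - k)) (g (a - k + 2)) := by
    intro k
    induction k with
    | zero => simpa using h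
    | succ k ih => simpa [sub_sub] using hstep _ ih
  have : NeZero M := ⟨hc.odd.pos.ne'⟩
  have hall' : ∀ b, A (g b) (g (b + 2)) := fun b => by simpa using hall (a - b).val
  exact hc.not_chord_two_of_chord_two hM (hall' a) (by convert hall' (a + 2) using 2; ring)

lemma evenChordFree_of_arcLocallyIn (hc : IsShortestOddCycle A M g)
    (hf : ArcLocallyInSemicomplete A) : EvenChordFree A M g := by
  intro s
  induction s using Nat.strong_induction_on with
  | _ s ih =>
  intro a hs h2 hsM h
  rcases h2.eq_or_lt with rfl | h2
  · exact hc.not_chord_two_of_arcLocallyIn hf hsM a (by simpa using h)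
  obtain ⟨t, rfl⟩ : ∃ t, s = t + 2 := ⟨s - 2, by omega⟩
  have ht : Even t := (Nat.even_add.1 hs).2 even_two
  have ht2 : 2 ≤ t := by obtain ⟨r, rfl⟩ := ht; omega
  have hne : g (a + t) ≠ g a := (hc.apply_ne (d := t) (by omega) (by omega) rfl).symm
  rcases hf (g (a + t + 1)) (g (a + (t + 2 : ℕ))) (g (a + t)) (g a)
      (hc.arc_of_eq (by push_cast; ring)) (hc.arc_of_eq rfl) h hne with h' | h'
  · exact hc.not_backward_chord ht (by omega) a h'
  · exact ih t (by omega) a ht ht2 (by omega) h'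

lemma evenChordFree_of_arcLocallyOut (hc : IsShortestOddCycle A M g)
    (hf : ArcLocallyOutSemicomplete A) : EvenChordFree A M g := by
  intro s a hs h2 hsM h
  refine hc.converse.evenChordFree_of_arcLocallyIn
    (fun u v x y huv hxu hyv hxy => hf v u y x huv hyv hxu hxy.symm) s (-(a + s)) hs h2 hsM ?_
  simpa [Converse] using h

lemma evenChordFree_of_threeAntiQuasiTransitive (hc : IsShortestOddCycle A M g)
    (hf : ThreeAntiQuasiTransitive A) (hT : TT3Free A) : EvenChordFree A M g := by
  intro s
  induction s using Nat.strong_induction_on with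
  | _ s ih =>
  intro a hs h2 hsM h
  rcases h2.eq_or_lt with rfl | h2
  · exact hT ⟨g a, g (a + 1), g (a + 2), hc.apply_ne (d := 1) (by omega) (by omega) (by simp),
      hc.apply_ne (d := 1) (by omega) (by omega) (by push_cast; ring),
      hc.apply_ne (d := 2) (by omega) (by omega) (by simp), hc.arc a,
      hc.arc_of_eq (by ring), by simpa using h⟩
  obtain ⟨t, rfl⟩ : ∃ t, s = t + 2 := ⟨s - 2, by omega⟩
  have ht : Even t := (Nat.even_add.1 hs).2 even_two
  have ht2 : 2 ≤ t := by obtain ⟨r, rfl⟩ := ht; omega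
  rcases hf (g (a + 1)) (g a) (g (a + (t + 2 : ℕ))) (g (a + 1 + t))
      (hc.apply_ne (d := t + 1) (by omega) (by omega) (by push_cast; ring))
      (hc.apply_ne (d := t + 1) (by omega) (by omega) (by push_cast; ring))
      (hc.apply_ne (d := t) (by omega) (by omega) rfl)
      (.inr ⟨hc.arc a, h, hc.arc_of_eq (by push_cast; ring)⟩) with h' | h'
  · exact ih t (by omega) (a + 1) ht ht2 (by omega) h'
  · exact hc.not_backward_chord ht (by omega) (a + 1) h'

end IsShortestOddCycle

theorem stmt18_general {V : Type} (A : V → V → Prop)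
    (ha : Asymmetric' A)
    (hfam : ArcLocallyInSemicomplete A ∨ ArcLocallyOutSemicomplete A ∨
      (ThreeAntiQuasiTransitive A ∧ TT3Free A)) :
    IsCKI A ↔ ∃ m : ℕ, Odd m ∧ 3 ≤ m ∧ DigraphIso A (Circ m ({1} : Set (ZMod m))) := by
  refine ⟨fun hc => ?_, fun ⟨m, hm, _, hiso⟩ => hiso.isCKI (isCKI_circ_one hm)⟩
  obtain ⟨M, g, hg⟩ := exists_isShortestOddCycle hc.exists_odd_closed_walk
  have hchord : EvenChordFree A M g := by
    rcases hfam with hf | hf | ⟨hf, hT⟩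
    · exact hg.evenChordFree_of_arcLocallyIn hf
    · exact hg.evenChordFree_of_arcLocallyOut hf
    · exact hg.evenChordFree_of_threeAntiQuasiTransitive hf hT
  have harc := hg.arc_iff ha hchord
  have hrange : range g = univ := by
    by_contra hne
    refine circ_one_not_hasKernel hg.odd (DigraphIso.hasKernel ?_ (hc.2 _ hne))
    exact (digraphIso_circ_one_of_equiv (A := Induced A (range g))
      (Equiv.ofInjective g hg.injective) harc).symm
  exact ⟨M, hg.odd, hg.three_le ha, digraphIso_circ_one_of_equiv
    (Equiv.ofBijective g ⟨hg.injective, range_eq_univ.1 hrange⟩) harc⟩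

/-- directed odd cycles are exactly the asymmetric CKI-digraphs among
arc-locally in/out-semicomplete and 3-anti-quasi-transitive TT₃-free digraphs. -/
theorem stmt18 {V : Type} [Fintype V] (A : V → V → Prop)
    (ha : Asymmetric' A)
    (hfam : ArcLocallyInSemicomplete A ∨ ArcLocallyOutSemicomplete A ∨
      (ThreeAntiQuasiTransitive A ∧ TT3Free A)) :
    IsCKI A ↔ ∃ m : ℕ, Odd m ∧ 3 ≤ m ∧ DigraphIso A (Circ m ({1} : Set (ZMod m))) :=
  stmt18_general A ha hfam
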